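/- For every natural number k, every real polynomial R with deg R ≤ k, and every real z ≠ 0, the function F(t) = z^{-(k+1)} · Σ_{j=0}^{⌊k/2⌋} [ (−1)^{j+1} z^{k−2j} cos(zt) R^{(2j)}(t) + (−1)^{j} z^{k−2j−1} sin(zt) R^{(2j+1)}(t) ] satisfies F′(t) = sin(zt)·R(t) for all real t; consequently ∫₀¹ sin(zt) R(t) dt = F(1) − F(0). -/

import Mathlib

open Real Polynomial

/-!
Differentiating the `j`-th summand (without the prefactor `z ^ (-(k + 1))`) gives
`g j - g (j + 1)` with `g j = (-1) ^ j * z ^ (k - 2j + 1) * sin (z t) * R^{(2j)}(t)`: the two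
`cos` terms cancel. The sum telescopes to `g 0 - g (k / 2 + 1)`, and the last term vanishes
because `2 (k / 2 + 1) > k ≥ deg R`. The integral formula is then the fundamental theorem of
calculus.
-/

theorem hasDerivAt_neg_cos_mul_add_sin_mul {f f' : ℝ → ℝ} {f'' t : ℝ}
    (hf : HasDerivAt f (f' t) t) (hf' : HasDerivAt f' f'' t) (c : ℝ) {z : ℝ} (hz : z ≠ 0)
    (m : ℤ) :
    HasDerivAt (fun t => -c * z ^ m * cos (z * t) * f t + c * z ^ (m - 1) * sin (z * t) * f' t)
      (c * z ^ (m + 1) * sin (z * t) * f t + c * z ^ (m - 1) * sin (z * t) * f'') t := by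
  have hzt : HasDerivAt (fun t => z * t) z t := by simpa using (hasDerivAt_id t).const_mul z
  have hcos := ((hasDerivAt_cos (z * t)).comp t hzt).mul hf
  have hsin := ((hasDerivAt_sin (z * t)).comp t hzt).mul hf'
  refine ((hcos.const_mul (-c * z ^ m)).add (hsin.const_mul (c * z ^ (m - 1))))
    |>.congr_of_eventuallyEq (.of_forall fun t => ?_) |>.congr_deriv ?_
  · simp only [Pi.add_apply, Pi.mul_apply, Function.comp_apply]
    ring
  · have hm : z ^ m = z ^ (m - 1) * z := by rw [← zpow_add_one₀ hz, sub_add_cancel]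
    simp only [Function.comp_apply]
    rw [zpow_add_one₀ hz, hm]
    ring

theorem hasDerivAt_eval_iterate_derivative (P : ℝ[X]) (i : ℕ) (t : ℝ) :
    HasDerivAt (fun t => (derivative^[i] P).eval t) ((derivative^[i + 1] P).eval t) t := by
  simpa only [Function.iterate_succ_apply'] using (derivative^[i] P).hasDerivAt t

theorem hasDerivAt_sum_cos_sin_iterate_derivative (R : ℝ[X]) {z : ℝ} (hz : z ≠ 0) (k : ℤ)
    (n : ℕ) (t : ℝ) :
    HasDerivAt (fun t => ∑ j ∈ Finset.range n,
        ((-1 : ℝ) ^ (j + 1) * z ^ (k - 2 * j) * cos (z * t) * (derivative^[2 * j] R).eval t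
          + (-1 : ℝ) ^ j * z ^ (k - 2 * j - 1) * sin (z * t) *
            (derivative^[2 * j + 1] R).eval t))
      (z ^ (k + 1) * sin (z * t) * R.eval t
        - (-1 : ℝ) ^ n * z ^ (k - 2 * n + 1) * sin (z * t) * (derivative^[2 * n] R).eval t) t := by
  set g : ℕ → ℝ := fun j =>
    (-1 : ℝ) ^ j * z ^ (k - 2 * j + 1) * sin (z * t) * (derivative^[2 * j] R).eval t
  have hterm (j : ℕ) : HasDerivAt (fun t =>
      (-1 : ℝ) ^ (j + 1) * z ^ (k - 2 * j) * cos (z * t) * (derivative^[2 * j] R).eval t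
        + (-1 : ℝ) ^ j * z ^ (k - 2 * j - 1) * sin (z * t) * (derivative^[2 * j + 1] R).eval t)
      (g j - g (j + 1)) t := by
    refine hasDerivAt_neg_cos_mul_add_sin_mul (hasDerivAt_eval_iterate_derivative R (2 * j) t)
      (hasDerivAt_eval_iterate_derivative R (2 * j + 1) t) ((-1) ^ j) hz (k - 2 * j)
      |>.congr_of_eventuallyEq (.of_forall fun t => by ring) |>.congr_deriv ?_
    simp only [g]
    push_cast
    ring_nf
  refine (HasDerivAt.fun_sum fun j _ => hterm j).congr_deriv ?_
  rw [Finset.sum_range_sub']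
  simp [g]

theorem stmt0 (k : ℕ) (R : Polynomial ℝ) (hR : R.natDegree ≤ k) (z : ℝ) (hz : z ≠ 0)
    (F : ℝ → ℝ)
    (hF : F = fun t => z ^ (-((k : ℤ) + 1)) *
      ∑ j ∈ Finset.range (k / 2 + 1),
        ((-1 : ℝ) ^ (j + 1) * z ^ ((k : ℤ) - 2 * j) * Real.cos (z * t) *
            ((Polynomial.derivative^[2 * j] R).eval t)
          + (-1 : ℝ) ^ j * z ^ ((k : ℤ) - 2 * j - 1) * Real.sin (z * t) *
            ((Polynomial.derivative^[2 * j + 1] R).eval t))) :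
    (∀ t : ℝ, HasDerivAt F (Real.sin (z * t) * R.eval t) t) ∧
    (∫ t in (0 : ℝ)..1, Real.sin (z * t) * R.eval t) = F 1 - F 0 := by
  have hvanish : derivative^[2 * (k / 2 + 1)] R = 0 :=
    iterate_derivative_eq_zero (by omega)
  have hderiv (t : ℝ) : HasDerivAt F (sin (z * t) * R.eval t) t := by
    subst hF
    refine ((hasDerivAt_sum_cos_sin_iterate_derivative R hz k (k / 2 + 1) t).const_mul
      (z ^ (-((k : ℤ) + 1)))).congr_deriv ?_
    rw [hvanish, eval_zero, mul_zero, sub_zero, ← mul_assoc, ← mul_assoc,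
      ← zpow_add₀ hz, neg_add_cancel, zpow_zero, one_mul]
  refine ⟨hderiv, intervalIntegral.integral_eq_sub_of_hasDerivAt (fun t _ => hderiv t) ?_⟩
  exact (by fun_prop : Continuous fun t => sin (z * t) * R.eval t).intervalIntegrable 0 1
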